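/- arXiv:2103.07984 — 3 statements merged into one kernel-verified Lean document; each statement's English description precedes it below -/
import Mathlib

section
/- Fix x₀ ∈ ℝⁿ and a real q ≥ 2. The function ψ(x) = (1/q)‖x − x₀‖^q is uniformly convex of degree q with constant σ_q = (1/2)^{q−2}, i.e., for all x, y: ψ(y) ≥ ψ(x) + ⟨∇ψ(x), y − x⟩ + (σ_q/q)‖x − y‖^q. -/
/-!
In one dimension, `x ↦ |x| ^ (q - 2) * x` is strongly monotone with the sharp constant
`2 ^ (2 - q)`: superadditivity of `t ↦ t ^ (q - 1)` handles arguments of equal sign, the power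
mean inequality arguments of opposite sign. Hence the Bregman remainder of `|·| ^ q` at `a`, minus
`2 ^ (2 - q) * |b - a| ^ q`, has derivative changing sign from `-` to `+` at `a`, so is
nonnegative.

In an inner product space the inequality only involves `A = ‖u‖`, `B = ‖v‖` and `s = ‖v - u‖²`,
and its left-hand side is convex in `s` on `[(B - A)², (A + B)²]`. At the two endpoints `v` is a
nonnegative or a nonpositive multiple of `u`, which is the one-dimensional case.
-/

open Real

namespace Real

lemma rpow_add_le_mul_rpow_add_rpow {a b p : ℝ} (ha : 0 ≤ a) (hb : 0 ≤ b) (hp : 1 ≤ p) :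
    (a + b) ^ p ≤ 2 ^ (p - 1) * (a ^ p + b ^ p) := by
  lift a to NNReal using ha
  lift b to NNReal using hb
  exact_mod_cast NNReal.rpow_add_le_mul_rpow_add_rpow a b hp

lemma sub_rpow_le_rpow_sub_rpow {a b p : ℝ} (ha : 0 ≤ a) (hab : a ≤ b) (hp : 1 ≤ p) :
    (b - a) ^ p ≤ b ^ p - a ^ p := by
  have := add_rpow_le_rpow_add ha (sub_nonneg.2 hab) hp
  rw [add_sub_cancel] at this
  linarith

lemma abs_rpow_mul_self_of_nonneg {x p : ℝ} (hx : 0 ≤ x) (hp : p ≠ 1) :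
    |x| ^ (p - 2) * x = x ^ (p - 1) := by
  rw [abs_of_nonneg hx, ← rpow_add_one' hx (by contrapose! hp; linarith)]
  ring_nf

lemma abs_rpow_mul_self_of_nonpos {x p : ℝ} (hx : x ≤ 0) (hp : p ≠ 1) :
    |x| ^ (p - 2) * x = -(-x) ^ (p - 1) := by
  rw [← abs_rpow_mul_self_of_nonneg (neg_nonneg.2 hx) hp, abs_neg]
  ring

lemma le_abs_rpow_mul_sub_abs_rpow_mul {q a b : ℝ} (hq : 2 ≤ q) (hab : a ≤ b) :
    (1 / 2 : ℝ) ^ (q - 2) * (|b - a| ^ (q - 2) * (b - a)) ≤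
      |b| ^ (q - 2) * b - |a| ^ (q - 2) * a := by
  have hq_sub_one : 1 ≤ q - 1 := by linarith
  have hq_ne : q ≠ 1 := by contrapose! hq; linarith
  have hK : (1 / 2 : ℝ) ^ (q - 2) ≤ 1 := rpow_le_one (by norm_num) (by norm_num) (by linarith)
  have hba : 0 ≤ (b - a) ^ (q - 1) := rpow_nonneg (sub_nonneg.2 hab) _
  rw [abs_rpow_mul_self_of_nonneg (sub_nonneg.2 hab) hq_ne]
  rcases le_total 0 a with ha | ha
  · rw [abs_rpow_mul_self_of_nonneg ha hq_ne,
      abs_rpow_mul_self_of_nonneg (ha.trans hab) hq_ne]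
    nlinarith [sub_rpow_le_rpow_sub_rpow ha hab hq_sub_one]
  rw [abs_rpow_mul_self_of_nonpos ha hq_ne]
  rcases le_total b 0 with hb | hb
  · have hsuper := sub_rpow_le_rpow_sub_rpow (neg_nonneg.2 hb) (neg_le_neg hab) hq_sub_one
    rw [neg_sub_neg] at hsuper
    rw [abs_rpow_mul_self_of_nonpos hb hq_ne]
    nlinarith
  · have hmean := rpow_add_le_mul_rpow_add_rpow hb (neg_nonneg.2 ha) hq_sub_one
    rw [show q - 1 - 1 = q - 2 by ring, ← sub_eq_add_neg] at hmean
    have hK_mul : (1 / 2 : ℝ) ^ (q - 2) * 2 ^ (q - 2) = 1 := by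
      rw [← mul_rpow (by norm_num) (by norm_num)]; norm_num
    rw [abs_rpow_mul_self_of_nonneg hb hq_ne, sub_neg_eq_add]
    calc (1 / 2 : ℝ) ^ (q - 2) * (b - a) ^ (q - 1)
        ≤ (1 / 2 : ℝ) ^ (q - 2) * (2 ^ (q - 2) * (b ^ (q - 1) + (-a) ^ (q - 1))) := by gcongr
      _ = b ^ (q - 1) + (-a) ^ (q - 1) := by rw [← mul_assoc, hK_mul, one_mul]

lemma abs_rpow_uniformly_convex {q : ℝ} (hq : 2 ≤ q) (a b : ℝ) :
    |a| ^ q + q * (|a| ^ (q - 2) * a) * (b - a) + (1 / 2 : ℝ) ^ (q - 2) * |b - a| ^ q ≤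
      |b| ^ q := by
  set K : ℝ := (1 / 2 : ℝ) ^ (q - 2)
  set F : ℝ → ℝ := fun t => |t| ^ q - q * (|a| ^ (q - 2) * a) * (t - a) - K * |t - a| ^ q
  have hF : ∀ t, HasDerivAt F
      (q * (|t| ^ (q - 2) * t - |a| ^ (q - 2) * a - K * (|t - a| ^ (q - 2) * (t - a)))) t := by
    intro t
    have h₁ := hasDerivAt_abs_rpow t (by linarith : 1 < q)
    have h₂ := (hasDerivAt_abs_rpow (t - a) (by linarith : 1 < q)).comp t
      ((hasDerivAt_id t).sub_const a)
    have h₃ := ((hasDerivAt_id t).sub_const a).const_mul (q * (|a| ^ (q - 2) * a))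
    exact ((h₁.sub h₃).sub (h₂.const_mul K)).congr_deriv (by ring)
  have hmin : IsMinOn F Set.univ a := by
    refine isMinOn_univ_of_deriv (hF a).continuousAt
      (fun t _ => (hF t).differentiableAt.differentiableWithinAt)
      (fun t _ => (hF t).differentiableAt.differentiableWithinAt) ?_ ?_
    · intro t ht
      have hmono := le_abs_rpow_mul_sub_abs_rpow_mul hq ht.le
      rw [(hF t).deriv, abs_sub_comm t a, show t - a = -(a - t) by ring]
      exact mul_nonpos_of_nonneg_of_nonpos (by linarith) (by linarith)
    · intro t ht
      have hmono := le_abs_rpow_mul_sub_abs_rpow_mul hq ht.le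
      rw [(hF t).deriv]
      exact mul_nonneg (by linarith) (by linarith)
  have hFb := hmin (Set.mem_univ b)
  simp only [Set.mem_ofPred_eq, F, sub_self, abs_zero, zero_rpow (by linarith : q ≠ 0)] at hFb
  linarith

lemma rpow_add_mul_sub_sq_add_rpow_le {q A B D : ℝ} (hq : 2 ≤ q) (hA : 0 ≤ A) (hB : 0 ≤ B)
    (hD₁ : |B - A| ≤ D) (hD₂ : D ≤ A + B) :
    A ^ q + q / 2 * A ^ (q - 2) * (B ^ 2 - A ^ 2 - D ^ 2) + (1 / 2 : ℝ) ^ (q - 2) * D ^ q ≤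
      B ^ q := by
  have hD : 0 ≤ D := (abs_nonneg _).trans hD₁
  have hconv : ConvexOn ℝ (Set.Ici 0)
      (fun s : ℝ => (1 / 2 : ℝ) ^ (q - 2) * s ^ (q / 2) - q / 2 * A ^ (q - 2) * s) :=
    ((convexOn_rpow (by linarith)).smul (by positivity)).sub
      ((concaveOn_id (convex_Ici 0)).smul (by positivity))
  have hseg : D ^ 2 ∈ segment ℝ (|B - A| ^ 2) ((A + B) ^ 2) := by
    rw [segment_eq_Icc (pow_le_pow_left₀ (abs_nonneg _) (hD₁.trans hD₂) 2)]
    exact ⟨pow_le_pow_left₀ (abs_nonneg _) hD₁ 2, pow_le_pow_left₀ hD hD₂ 2⟩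
  have hmax :=
    hconv.le_on_segment (Set.mem_Ici.2 (sq_nonneg _)) (Set.mem_Ici.2 (sq_nonneg _)) hseg
  simp only [rpow_div_two_eq_sqrt _ (sq_nonneg _), sqrt_sq_eq_abs, sq_abs,
    abs_of_nonneg hD, abs_of_nonneg (add_nonneg hA hB)] at hmax
  have h₁ := abs_rpow_uniformly_convex hq A B
  have h₂ := abs_rpow_uniformly_convex hq A (-B)
  rw [abs_of_nonneg hA, abs_of_nonneg hB] at h₁
  rw [abs_of_nonneg hA, abs_neg, abs_of_nonneg hB, show -B - A = -(A + B) by ring, abs_neg,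
    abs_of_nonneg (by positivity : 0 ≤ A + B)] at h₂
  set R := B ^ q - A ^ q - q / 2 * A ^ (q - 2) * (B ^ 2 - A ^ 2)
  have hR₁ : (1 / 2 : ℝ) ^ (q - 2) * |B - A| ^ q - q / 2 * A ^ (q - 2) * (B - A) ^ 2 ≤ R := by
    linear_combination h₁
  have hR₂ : (1 / 2 : ℝ) ^ (q - 2) * (A + B) ^ q - q / 2 * A ^ (q - 2) * (A + B) ^ 2 ≤ R := by
    linear_combination h₂
  linear_combination hmax.trans (max_le hR₁ hR₂)

end Real

theorem norm_rpow_uniformly_convex {E : Type*} [NormedAddCommGroup E] [InnerProductSpace ℝ E]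
    {q : ℝ} (hq : 2 ≤ q) (u v : E) :
    ‖u‖ ^ q + q * inner ℝ (‖u‖ ^ (q - 2) • u) (v - u) + (1 / 2 : ℝ) ^ (q - 2) * ‖v - u‖ ^ q ≤
      ‖v‖ ^ q := by
  have h := rpow_add_mul_sub_sq_add_rpow_le hq (norm_nonneg u) (norm_nonneg v)
    (abs_norm_sub_norm_le v u) ((norm_sub_le v u).trans_eq (add_comm _ _))
  have hinner : 2 * inner ℝ u (v - u) = ‖v‖ ^ 2 - ‖u‖ ^ 2 - ‖v - u‖ ^ 2 := by
    rw [norm_sub_sq_real, inner_sub_right, real_inner_self_eq_norm_sq, real_inner_comm]; ring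
  rw [real_inner_smul_left]
  linear_combination h + q / 2 * ‖u‖ ^ (q - 2) * hinner

/-- ψ(x) = (1/q)‖x - x₀‖^q is uniformly convex of degree q with constant (1/2)^(q-2). -/
theorem power_norm_uniformly_convex {n : ℕ} (q : ℝ) (hq : 2 ≤ q)
    (x₀ : EuclideanSpace ℝ (Fin n)) :
    ∀ x y : EuclideanSpace ℝ (Fin n),
      (1 / q) * ‖y - x₀‖ ^ q ≥
        (1 / q) * ‖x - x₀‖ ^ q
          + inner ℝ (‖x - x₀‖ ^ (q - 2) • (x - x₀)) (y - x)
          + ((1 / 2 : ℝ) ^ (q - 2) / q) * ‖x - y‖ ^ q := by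
  intro x y
  have h := norm_rpow_uniformly_convex hq (x - x₀) (y - x₀)
  rw [sub_sub_sub_cancel_right, norm_sub_rev y x] at h
  calc (1 / q) * ‖x - x₀‖ ^ q + inner ℝ (‖x - x₀‖ ^ (q - 2) • (x - x₀)) (y - x)
        + ((1 / 2 : ℝ) ^ (q - 2) / q) * ‖x - y‖ ^ q
      = (1 / q) * (‖x - x₀‖ ^ q + q * inner ℝ (‖x - x₀‖ ^ (q - 2) • (x - x₀)) (y - x)
          + (1 / 2 : ℝ) ^ (q - 2) * ‖x - y‖ ^ q) := by field_simp
    _ ≤ (1 / q) * ‖y - x₀‖ ^ q := by gcongr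
end

section
/- Let ψ(x) = log(Σ_{i=1}^m exp(⟨a_i, x⟩)) be the log-sum-exp function on ℝⁿ with vectors a₁,…,a_m, and suppose D := Σ_{i=1}^m a_i a_iᵀ is positive definite. Endow ℝⁿ with the norm ‖x‖ = ⟨Dx, x⟩^{1/2}. Then the gradient of ψ is Lipschitz continuous with constant L₁ = 1 with respect to this norm, i.e., ψ(y) ≤ ψ(x) + ⟨∇ψ(x), y − x⟩ + (1/2)‖y − x‖² for all x, y. -/
/-!
Along the line `t ↦ x + t (y - x)`, with `bᵢ = ⟨aᵢ, y - x⟩`, the second derivative of `ψ` is the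
variance of `b` under the softmax weights `p(t)`. It is at most `∑ pᵢ bᵢ² ≤ ∑ bᵢ² = ⟨D (y - x), y - x⟩`,
so `t ↦ ½ t² ⟨D (y - x), y - x⟩ - ψ (x + t (y - x))` is convex and lies above its tangent at `0`;
evaluating at `t = 1` gives the inequality.
-/

open Real Finset

theorem ConvexOn.add_mul_sub_le_of_hasDerivAt {S : Set ℝ} {f : ℝ → ℝ} {f' x y : ℝ}
    (hfc : ConvexOn ℝ S f) (hx : x ∈ S) (hy : y ∈ S) (hf : HasDerivAt f f' x) :
    f x + f' * (y - x) ≤ f y := by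
  rcases lt_trichotomy x y with hxy | rfl | hyx
  · have := hfc.le_slope_of_hasDerivAt hx hy hxy hf
    rw [slope_def_field, le_div_iff₀ (sub_pos.2 hxy)] at this
    linarith
  · simp
  · have := hfc.slope_le_of_hasDerivAt hy hx hyx hf
    rw [slope_def_field, div_le_iff₀ (sub_pos.2 hyx)] at this
    linarith

theorem le_add_mul_sub_add_sq_of_hasDerivAt2_le {f f' f'' : ℝ → ℝ} {K : ℝ}
    (hf : ∀ t, HasDerivAt f (f' t) t) (hf' : ∀ t, HasDerivAt f' (f'' t) t)
    (hK : ∀ t, f'' t ≤ K) (x y : ℝ) :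
    f y ≤ f x + f' x * (y - x) + K / 2 * (y - x) ^ 2 := by
  set g : ℝ → ℝ := fun t => K / 2 * t ^ 2 - f t
  have hg (t : ℝ) : HasDerivAt g (K * t - f' t) t :=
    (((hasDerivAt_pow 2 t).const_mul (K / 2)).fun_sub (hf t)).congr_deriv (by push_cast; ring)
  have hg' (t : ℝ) : HasDerivAt (fun t => K * t - f' t) (K - f'' t) t := by
    simpa using ((hasDerivAt_id t).const_mul K).fun_sub (hf' t)
  have hconv : ConvexOn ℝ Set.univ g :=
    convexOn_of_hasDerivWithinAt2_nonneg convex_univ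
      (fun t _ => (hg t).continuousAt.continuousWithinAt)
      (fun t _ => (hg t).hasDerivWithinAt) (fun t _ => (hg' t).hasDerivWithinAt)
      (fun t _ => sub_nonneg.2 (hK t))
  have := hconv.add_mul_sub_le_of_hasDerivAt (Set.mem_univ x) (Set.mem_univ y) (hg x)
  simp only [g] at this
  linarith

theorem sum_mul_sq_mul_sum_sub_sq_le {ι : Type*} [Fintype ι] (w b : ι → ℝ)
    (hw : ∀ i, 0 ≤ w i) :
    (∑ i, w i * b i ^ 2) * ∑ i, w i - (∑ i, w i * b i) ^ 2 ≤
      (∑ i, b i ^ 2) * (∑ i, w i) ^ 2 := by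
  have hw_le (i : ι) : w i ≤ ∑ j, w j := single_le_sum (fun j _ => hw j) (mem_univ i)
  have hsecond : ∑ i, w i * b i ^ 2 ≤ (∑ i, b i ^ 2) * ∑ i, w i := by
    rw [sum_mul]
    exact sum_le_sum fun i _ => by nlinarith [sq_nonneg (b i), hw_le i]
  nlinarith [sq_nonneg (∑ i, w i * b i), sum_nonneg fun i (_ : i ∈ univ) => hw i]

theorem log_sum_exp_add_le {ι : Type*} [Fintype ι] (c b : ι → ℝ) :
    log (∑ i, exp (c i + b i)) ≤
      log (∑ i, exp (c i)) + (∑ i, exp (c i) * b i) / (∑ i, exp (c i)) +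
        1 / 2 * ∑ i, b i ^ 2 := by
  rcases isEmpty_or_nonempty ι with hι | hι
  · simp
  set S : ℝ → ℝ := fun t => ∑ i, exp (c i + t * b i)
  set N : ℝ → ℝ := fun t => ∑ i, exp (c i + t * b i) * b i
  set M : ℝ → ℝ := fun t => ∑ i, exp (c i + t * b i) * b i ^ 2
  have hS_pos (t : ℝ) : 0 < S t := sum_pos (fun i _ => exp_pos _) univ_nonempty
  have hexp (i : ι) (t : ℝ) :
      HasDerivAt (fun t => exp (c i + t * b i)) (exp (c i + t * b i) * b i) t := by
    simpa using (((hasDerivAt_id t).mul_const (b i)).const_add (c i)).exp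
  have hS (t : ℝ) : HasDerivAt S (N t) t := HasDerivAt.fun_sum fun i _ => hexp i t
  have hN (t : ℝ) : HasDerivAt N (M t) t :=
    HasDerivAt.fun_sum fun i _ => ((hexp i t).mul_const (b i)).congr_deriv (by ring)
  have hvariance (t : ℝ) : (M t * S t - N t * N t) / S t ^ 2 ≤ ∑ i, b i ^ 2 := by
    rw [div_le_iff₀ (by positivity), ← sq]
    exact sum_mul_sq_mul_sum_sub_sq_le _ b fun i => (exp_pos _).le
  have := le_add_mul_sub_add_sq_of_hasDerivAt2_le (fun t => (hS t).log (hS_pos t).ne')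
    (fun t => (hN t).div (hS t) (hS_pos t).ne') hvariance 0 1
  simpa [S, N, div_eq_inv_mul] using this

theorem fderiv_log_sum_exp_inner_apply {ι E : Type*} [Fintype ι] [NormedAddCommGroup E]
    [InnerProductSpace ℝ E] (a : ι → E) (x v : E) :
    fderiv ℝ (fun z => log (∑ i, exp (inner ℝ (a i) z))) x v =
      (∑ i, exp (inner ℝ (a i) x) * inner ℝ (a i) v) / ∑ i, exp (inner ℝ (a i) x) := by
  rcases isEmpty_or_nonempty ι with hι | hι
  · simp
  have hsum : HasFDerivAt (fun z => ∑ i, exp (inner ℝ (a i) z))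
      (∑ i, exp (inner ℝ (a i) x) • innerSL ℝ (a i)) x :=
    HasFDerivAt.fun_sum fun i _ => (innerSL ℝ (a i)).hasFDerivAt.exp
  rw [(hsum.log (sum_pos (fun i _ => exp_pos _) univ_nonempty).ne').fderiv]
  simp [div_eq_inv_mul]

theorem log_sum_exp_gradient_lipschitz_general {n m : ℕ} (a : Fin m → EuclideanSpace ℝ (Fin n))
    (D : EuclideanSpace ℝ (Fin n) → EuclideanSpace ℝ (Fin n))
    (hD : D = fun x => ∑ i, (inner ℝ (a i) x : ℝ) • a i)
    (ψ : EuclideanSpace ℝ (Fin n) → ℝ)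
    (hψ : ψ = fun x => Real.log (∑ i, Real.exp (inner ℝ (a i) x : ℝ))) :
    ∀ x y : EuclideanSpace ℝ (Fin n),
      ψ y ≤ ψ x + fderiv ℝ ψ x (y - x) + (1 / 2) * (inner ℝ (D (y - x)) (y - x) : ℝ) := by
  subst hD hψ
  intro x y
  have hquad : inner ℝ (∑ i, inner ℝ (a i) (y - x) • a i) (y - x) =
      ∑ i, inner ℝ (a i) (y - x) ^ 2 := by
    simp [sum_inner, real_inner_smul_left, sq]
  have key := log_sum_exp_add_le (fun i => inner ℝ (a i) x) (fun i => inner ℝ (a i) (y - x))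
  simp only [← inner_add_right, add_sub_cancel] at key
  rwa [fderiv_log_sum_exp_inner_apply, hquad]

/-- The log-sum-exp function has Lipschitz continuous gradient with constant 1
with respect to the norm induced by D = ∑ aᵢ aᵢᵀ. -/
theorem log_sum_exp_gradient_lipschitz {n m : ℕ} (a : Fin m → EuclideanSpace ℝ (Fin n))
    (D : EuclideanSpace ℝ (Fin n) → EuclideanSpace ℝ (Fin n))
    (hD : D = fun x => ∑ i, (inner ℝ (a i) x : ℝ) • a i)
    (hDpos : ∀ x : EuclideanSpace ℝ (Fin n), x ≠ 0 → (0 : ℝ) < inner ℝ (D x) x)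
    (ψ : EuclideanSpace ℝ (Fin n) → ℝ)
    (hψ : ψ = fun x => Real.log (∑ i, Real.exp (inner ℝ (a i) x : ℝ))) :
    ∀ x y : EuclideanSpace ℝ (Fin n),
      ψ y ≤ ψ x + fderiv ℝ ψ x (y - x) + (1 / 2) * (inner ℝ (D (y - x)) (y - x) : ℝ) :=
  log_sum_exp_gradient_lipschitz_general a D hD ψ hψ
end

section
/- Closed-form proximal operator of the quartic: for any y₀ ∈ ℝⁿ, the unique minimizer y of F(y) = (1/4)‖y‖⁴ + (1/2)‖y − y₀‖² is y = y₀/(ρ² + 1), where ρ ≥ 0 is the unique nonnegative real root of the cubic equation ρ³ + ρ = ‖y₀‖; moreover ρ = ‖y‖. -/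
open Real

/-! With `y₀ = (‖y‖² + 1) • y`, the objective satisfies the exact expansion
`F z - F y = ¼ (‖z‖² - ‖y‖²)² + ½ (‖y‖² + 1) ‖z - y‖²`, so `y` is the strict global minimizer.
The point `y = y₀ / (ρ² + 1)` has this form because `ρ³ + ρ = ‖y₀‖` forces `‖y‖ = ρ`. -/

section QuarticProx

variable {E : Type*} [NormedAddCommGroup E] [InnerProductSpace ℝ E]

theorem quartic_prox_objective_sub_eq {y₀ y : E} (hy₀ : y₀ = (‖y‖ ^ 2 + 1) • y) (z : E) :
    ((1 / 4) * ‖z‖ ^ 4 + (1 / 2) * ‖z - y₀‖ ^ 2) - ((1 / 4) * ‖y‖ ^ 4 + (1 / 2) * ‖y - y₀‖ ^ 2)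
      = (1 / 4) * (‖z‖ ^ 2 - ‖y‖ ^ 2) ^ 2 + (1 / 2) * (‖y‖ ^ 2 + 1) * ‖z - y‖ ^ 2 := by
  have hzy₀ : ‖z - y₀‖ ^ 2 = ‖z‖ ^ 2 - 2 * (‖y‖ ^ 2 + 1) * inner ℝ z y + ‖y₀‖ ^ 2 := by
    rw [norm_sub_sq_real, hy₀, real_inner_smul_right]; ring
  have hyy₀ : ‖y - y₀‖ ^ 2 = ‖y‖ ^ 2 - 2 * (‖y‖ ^ 2 + 1) * ‖y‖ ^ 2 + ‖y₀‖ ^ 2 := by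
    rw [norm_sub_sq_real, hy₀, real_inner_smul_right, real_inner_self_eq_norm_sq]; ring
  rw [hzy₀, hyy₀, norm_sub_sq_real]
  ring

theorem half_norm_sub_sq_le_quartic_prox_objective_sub {y₀ y : E}
    (hy₀ : y₀ = (‖y‖ ^ 2 + 1) • y) (z : E) :
    (1 / 2) * ‖z - y‖ ^ 2 ≤
      ((1 / 4) * ‖z‖ ^ 4 + (1 / 2) * ‖z - y₀‖ ^ 2) -
        ((1 / 4) * ‖y‖ ^ 4 + (1 / 2) * ‖y - y₀‖ ^ 2) := by
  rw [quartic_prox_objective_sub_eq hy₀]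
  nlinarith [sq_nonneg (‖z‖ ^ 2 - ‖y‖ ^ 2), sq_nonneg ‖y‖, sq_nonneg ‖z - y‖,
    mul_nonneg (sq_nonneg ‖y‖) (sq_nonneg ‖z - y‖)]

end QuarticProx

theorem norm_inv_smul_eq_of_cubic {E : Type*} [NormedAddCommGroup E] [NormedSpace ℝ E]
    {y₀ : E} {ρ : ℝ} (hroot : ρ ^ 3 + ρ = ‖y₀‖) : ‖(ρ ^ 2 + 1)⁻¹ • y₀‖ = ρ := by
  have hpos : 0 < ρ ^ 2 + 1 := by positivity
  rw [norm_smul, norm_inv, Real.norm_of_nonneg hpos.le, ← hroot]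
  field_simp

theorem quartic_prox_closed_form_general {n : ℕ} (y₀ : EuclideanSpace ℝ (Fin n))
    (ρ : ℝ) (hroot : ρ ^ 3 + ρ = ‖y₀‖)
    (F : EuclideanSpace ℝ (Fin n) → ℝ)
    (hF : F = fun y => (1 / 4) * ‖y‖ ^ 4 + (1 / 2) * ‖y - y₀‖ ^ 2)
    (y : EuclideanSpace ℝ (Fin n)) (hy : y = (ρ ^ 2 + 1)⁻¹ • y₀) :
    (∀ z, F y ≤ F z) ∧ (∀ z, (∀ w, F z ≤ F w) → z = y) ∧ ‖y‖ = ρ := by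
  have hnorm : ‖y‖ = ρ := hy ▸ norm_inv_smul_eq_of_cubic hroot
  have hy₀ : y₀ = (‖y‖ ^ 2 + 1) • y := by
    rw [hnorm, hy, smul_inv_smul₀ (by positivity)]
  have hgap : ∀ z, (1 / 2) * ‖z - y‖ ^ 2 ≤ F z - F y := fun z => by
    subst hF; exact half_norm_sub_sq_le_quartic_prox_objective_sub hy₀ z
  have hmin : ∀ z, F y ≤ F z := fun z => by
    linarith [hgap z, sq_nonneg ‖z - y‖]
  refine ⟨hmin, fun z hz => ?_, hnorm⟩
  have hsq : ‖z - y‖ ^ 2 ≤ 0 := by linarith [hgap z, hz y]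
  exact sub_eq_zero.mp (norm_eq_zero.mp (pow_eq_zero_iff two_ne_zero |>.mp
    (le_antisymm hsq (sq_nonneg _))))

/-- Closed-form proximal operator of the quartic term: the unique minimizer of
F(y) = (1/4)‖y‖⁴ + (1/2)‖y - y₀‖² is y = y₀/(ρ² + 1), where ρ ≥ 0 is the unique
nonnegative root of ρ³ + ρ = ‖y₀‖, and ρ = ‖y‖. -/
theorem quartic_prox_closed_form {n : ℕ} (y₀ : EuclideanSpace ℝ (Fin n))
    (ρ : ℝ) (hρ : 0 ≤ ρ) (hroot : ρ ^ 3 + ρ = ‖y₀‖)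
    (F : EuclideanSpace ℝ (Fin n) → ℝ)
    (hF : F = fun y => (1 / 4) * ‖y‖ ^ 4 + (1 / 2) * ‖y - y₀‖ ^ 2)
    (y : EuclideanSpace ℝ (Fin n)) (hy : y = (ρ ^ 2 + 1)⁻¹ • y₀) :
    (∀ z, F y ≤ F z) ∧ (∀ z, (∀ w, F z ≤ F w) → z = y) ∧ ‖y‖ = ρ :=
  quartic_prox_closed_form_general y₀ ρ hroot F hF y hy
end
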